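/- arXiv:1903.08343 — 5 statements merged into one kernel-verified Lean document; each statement's English description precedes it below -/
import Mathlib

section
/- Let G = (U, V; E) be a finite bipartite graph with edge weights w : E → ℝ. For X ⊆ U, define f(X) as the maximum weight of a matching M ⊆ E whose set of matched vertices in U equals exactly X (and f(X) = −∞ if no such matching exists). Then f : 2^U → ℝ ∪ {−∞} is M♮-concave, i.e., for all X, Y ⊆ U with f(X), f(Y) > −∞ and any u ∈ X \ Y, either f(X−u) + f(Y+u) ≥ f(X) + f(Y), or there exists v ∈ Y \ X with f(X−u+v) + f(Y+u−v) ≥ f(X) + f(Y). -/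
set_option linter.unusedSectionVars false
namespace Stmt5Aux

variable {U V : Type*} [DecidableEq U] [DecidableEq V]

def Mat (M : Finset (U × V)) : Prop :=
  (∀ e ∈ M, ∀ e' ∈ M, e.1 = e'.1 → e = e') ∧ (∀ e ∈ M, ∀ e' ∈ M, e.2 = e'.2 → e = e')

lemma Mat.subset {M M' : Finset (U × V)} (h : Mat M) (hsub : M' ⊆ M) : Mat M' :=
  ⟨fun e he e' he' => h.1 e (hsub he) e' (hsub he'),
   fun e he e' he' => h.2 e (hsub he) e' (hsub he')⟩

lemma Mat.insert {M : Finset (U × V)} (h : Mat M) {a : U × V}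
    (hfr : ∀ e ∈ M, e.1 ≠ a.1 ∧ e.2 ≠ a.2) : Mat (insert a M) := by
  constructor
  · intro e he e' he' hee
    rcases Finset.mem_insert.1 he with h1 | h1 <;>
      rcases Finset.mem_insert.1 he' with h2 | h2
    · rw [h1, h2]
    · exact absurd (hee.symm.trans (congrArg Prod.fst h1)) (hfr e' h2).1
    · exact absurd (hee.trans (congrArg Prod.fst h2)) (hfr e h1).1
    · exact h.1 e h1 e' h2 hee
  · intro e he e' he' hee
    rcases Finset.mem_insert.1 he with h1 | h1 <;>
      rcases Finset.mem_insert.1 he' with h2 | h2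
    · rw [h1, h2]
    · exact absurd (hee.symm.trans (congrArg Prod.snd h1)) (hfr e' h2).2
    · exact absurd (hee.trans (congrArg Prod.snd h2)) (hfr e h1).2
    · exact h.2 e h1 e' h2 hee

lemma image_fst_erase {M : Finset (U × V)} (hM : Mat M) {u : U} {v : V} (h : (u, v) ∈ M) :
    (M.erase (u, v)).image Prod.fst = (M.image Prod.fst).erase u := by
  ext a
  simp only [Finset.mem_image, Finset.mem_erase]
  constructor
  · rintro ⟨e, ⟨hne, heM⟩, rfl⟩
    refine ⟨fun hh => hne ?_, ⟨e, heM, rfl⟩⟩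
    exact hM.1 e heM (u, v) h hh
  · rintro ⟨hne, e, heM, rfl⟩
    exact ⟨e, ⟨fun hh => hne (by rw [hh]), heM⟩, rfl⟩

lemma not_mem_image_fst {M : Finset (U × V)} {u : U} (h : u ∉ M.image Prod.fst) :
    ∀ v : V, (u, v) ∉ M := by
  intro v hv
  exact h (Finset.mem_image.2 ⟨(u, v), hv, rfl⟩)

lemma move_cons {α : Type*} [DecidableEq α] {s : Multiset α} (t : Multiset α) {a : α}
    (ha : a ∈ s) : s.erase a + (a ::ₘ t) = s + t := by
  rw [Multiset.add_cons, ← Multiset.cons_add, Multiset.cons_erase ha]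

end Stmt5Aux

namespace Stmt5Aux

variable {U V : Type*} [DecidableEq U] [DecidableEq V]

lemma swap_cons_add {α : Type*} (a b : α) (s t : Multiset α) :
    (b ::ₘ s) + (a ::ₘ t) = (a ::ₘ s) + (b ::ₘ t) := by
  rw [Multiset.cons_add, Multiset.cons_add, Multiset.add_cons, Multiset.add_cons,
    Multiset.cons_swap]

lemma key : ∀ n : ℕ, ∀ M N : Finset (U × V), (M \ N).card = n → Mat M → Mat N →
    ∀ u : U, u ∈ M.image Prod.fst → u ∉ N.image Prod.fst →
    ∃ M' N' : Finset (U × V), Mat M' ∧ Mat N' ∧ M'.val + N'.val = M.val + N.val ∧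
      ((M'.image Prod.fst = (M.image Prod.fst).erase u ∧
        N'.image Prod.fst = insert u (N.image Prod.fst)) ∨
       ∃ z : U, z ∈ N.image Prod.fst ∧ z ∉ M.image Prod.fst ∧
        M'.image Prod.fst = insert z ((M.image Prod.fst).erase u) ∧
        N'.image Prod.fst = (insert u (N.image Prod.fst)).erase z) := by
  intro n
  induction n using Nat.strong_induction_on with
  | _ n IH =>
  intro M N hcard hM hN u huM huN
  obtain ⟨⟨u0, v⟩, heM, he1⟩ := Finset.mem_image.1 huM
  simp only at he1
  subst he1
  have huvN : (u0, v) ∉ N := not_mem_image_fst huN v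
  by_cases hvN : ∃ u', (u', v) ∈ N
  · obtain ⟨u', hu'⟩ := hvN
    have hne : u' ≠ u0 := fun h => huvN (h ▸ hu')
    have hu'Nim : u' ∈ N.image Prod.fst := Finset.mem_image.2 ⟨(u', v), hu', rfl⟩
    -- freshness of (u0, v) w.r.t. N.erase (u', v)
    have hfrN : ∀ e ∈ N.erase (u', v), e.1 ≠ (u0, v).1 ∧ e.2 ≠ (u0, v).2 := by
      intro e he
      have heN : e ∈ N := Finset.mem_of_mem_erase he
      refine ⟨fun h => huN (Finset.mem_image.2 ⟨e, heN, h⟩), fun h => ?_⟩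
      exact (Finset.mem_erase.1 he).1 (hN.2 e heN (u', v) hu' h)
    have hNce : Mat (insert (u0, v) (N.erase (u', v))) :=
      (hN.subset (Finset.erase_subset _ _)).insert hfrN
    have huvNe : (u0, v) ∉ N.erase (u', v) := fun h => huvN (Finset.mem_of_mem_erase h)
    by_cases hu'M : u' ∈ M.image Prod.fst
    · -- Case B2: continue the alternating path
      set Nc := insert (u0, v) (N.erase (u', v)) with hNc
      have hNcval : Nc.val = (u0, v) ::ₘ (N.val.erase (u', v)) := by
        rw [hNc, Finset.insert_val_of_notMem huvNe, Finset.erase_val]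
      have hNcim : Nc.image Prod.fst = insert u0 ((N.image Prod.fst).erase u') := by
        rw [hNc, Finset.image_insert, image_fst_erase hN hu']
      have hsd : M \ Nc = (M \ N).erase (u0, v) := by
        ext e
        simp only [Finset.mem_sdiff, Finset.mem_erase, hNc, Finset.mem_insert]
        constructor
        · rintro ⟨heM', hne'⟩
          push_neg at hne'
          refine ⟨hne'.1, heM', fun heN => ?_⟩
          have hneu' : e ≠ (u', v) := by
            rintro rfl
            exact hne (congrArg Prod.fst (hM.2 (u', v) heM' (u0, v) heM rfl))
          exact hne'.2 hneu' heN
        · rintro ⟨hne', heM', heN⟩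
          refine ⟨heM', ?_⟩
          rintro (h | h)
          · exact hne' h
          · exact heN h.2
      have huvMN : (u0, v) ∈ M \ N := Finset.mem_sdiff.2 ⟨heM, huvN⟩
      have hlt : (M \ Nc).card < n := by
        rw [hsd, Finset.card_erase_of_mem huvMN, hcard]
        exact Nat.sub_lt (by rw [← hcard]; exact Finset.card_pos.2 ⟨_, huvMN⟩) one_pos
      have hu'Nc : u' ∉ Nc.image Prod.fst := by
        rw [hNcim]
        simp only [Finset.mem_insert, Finset.mem_erase]
        rintro (h | h)
        · exact hne h
        · exact h.1 rfl
      obtain ⟨M', N', hM', hN', hval, hcases⟩ :=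
        IH _ hlt M Nc rfl hM hNce u' hu'M hu'Nc
      have hmNc : (u0, v) ∈ Nc := Finset.mem_insert_self _ _
      have h1cnt : Multiset.count (u0, v) (M'.val + N'.val) = 2 := by
        rw [hval, Multiset.count_add, Multiset.count_eq_one_of_mem M.nodup heM,
          Multiset.count_eq_one_of_mem Nc.nodup hmNc]
      rw [Multiset.count_add] at h1cnt
      have l1 : Multiset.count (u0, v) M'.val ≤ 1 :=
        Multiset.nodup_iff_count_le_one.1 M'.nodup _
      have l2 : Multiset.count (u0, v) N'.val ≤ 1 :=
        Multiset.nodup_iff_count_le_one.1 N'.nodup _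
      have huvM' : (u0, v) ∈ M' := by
        rw [Finset.mem_def, ← Multiset.count_pos]; omega
      have huvN' : (u0, v) ∈ N' := by
        rw [Finset.mem_def, ← Multiset.count_pos]; omega
      have hu'M' : u' ∉ M'.image Prod.fst := by
        rcases hcases with ⟨h1, _⟩ | ⟨z, hz1, hz2, h1, _⟩
        · rw [h1]; exact Finset.notMem_erase _ _
        · rw [h1]
          simp only [Finset.mem_insert, Finset.mem_erase]
          rintro (h | h)
          · exact hz2 (h ▸ hu'M)
          · exact h.1 rfl
      have hfrM' : ∀ e ∈ M'.erase (u0, v),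
          e.1 ≠ ((u', v) : U × V).1 ∧ e.2 ≠ ((u', v) : U × V).2 := by
        intro e he
        have heM'' : e ∈ M' := Finset.mem_of_mem_erase he
        refine ⟨fun h => hu'M' (Finset.mem_image.2 ⟨e, heM'', h⟩), fun h => ?_⟩
        have hmem : e ∈ M.val + Nc.val := by
          rw [← hval]; exact Multiset.mem_add.2 (Or.inl heM'')
        rcases Multiset.mem_add.1 hmem with hm | hm
        · exact (Finset.mem_erase.1 he).1 (hM.2 e hm (u0, v) heM h)
        · exact (Finset.mem_erase.1 he).1 (hNce.2 e hm (u0, v) hmNc h)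
      have hu've : ((u', v) : U × V) ∉ M'.erase (u0, v) :=
        fun h => hu'M' (Finset.mem_image.2 ⟨_, Finset.mem_of_mem_erase h, rfl⟩)
      refine ⟨insert (u', v) (M'.erase (u0, v)), N',
        (hM'.subset (Finset.erase_subset _ _)).insert hfrM', hN', ?_, ?_⟩
      · have hkey : M'.val.erase (u0, v) + N'.val = M.val + N.val.erase (u', v) := by
          have hc : (u0, v) ::ₘ (M'.val.erase (u0, v) + N'.val)
              = (u0, v) ::ₘ (M.val + N.val.erase (u', v)) := by
            rw [← Multiset.cons_add, Multiset.cons_erase huvM', hval, hNcval,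
              Multiset.add_cons]
          exact (Multiset.cons_inj_right _).1 hc
        rw [Finset.insert_val_of_notMem hu've, Finset.erase_val, Multiset.cons_add, hkey,
          ← Multiset.add_cons, Multiset.cons_erase hu']
      · have hM'e : (M'.erase (u0, v)).image Prod.fst = (M'.image Prod.fst).erase u0 :=
          image_fst_erase hM' huvM'
        have hu'mem : u' ∈ (M.image Prod.fst).erase u0 := Finset.mem_erase.2 ⟨hne, hu'M⟩
        rcases hcases with ⟨h1, h2⟩ | ⟨z, hz1, hz2, h1, h2⟩
        · left
          constructor
          · rw [Finset.image_insert, hM'e, h1, Finset.erase_right_comm, Finset.insert_erase hu'mem]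
          · rw [h2, hNcim, Finset.insert_comm, Finset.insert_erase hu'Nim]
        · right
          have hzu0 : z ≠ u0 := fun h => hz2 (h ▸ huM)
          have hzY : z ∈ (N.image Prod.fst).erase u' := by
            rw [hNcim] at hz1
            rcases Finset.mem_insert.1 hz1 with h | h
            · exact (hzu0 h).elim
            · exact h
          refine ⟨z, Finset.mem_of_mem_erase hzY, hz2, ?_, ?_⟩
          · rw [Finset.image_insert, hM'e, h1, Finset.erase_insert_of_ne hzu0,
              Finset.insert_comm, Finset.erase_right_comm, Finset.insert_erase hu'mem]
          · rw [h2, hNcim, Finset.insert_comm, Finset.insert_erase hu'Nim]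
    · -- Case B1: path ends at u' ∈ Y \ X
      have hfrM : ∀ e ∈ M.erase (u0, v), e.1 ≠ ((u', v) : U × V).1 ∧ e.2 ≠ ((u', v) : U × V).2 := by
        intro e he
        have heM' : e ∈ M := Finset.mem_of_mem_erase he
        refine ⟨fun h => hu'M (Finset.mem_image.2 ⟨e, heM', h⟩), fun h => ?_⟩
        exact (Finset.mem_erase.1 he).1 (hM.2 e heM' (u0, v) heM h)
      refine ⟨insert (u', v) (M.erase (u0, v)), insert (u0, v) (N.erase (u', v)),
        (hM.subset (Finset.erase_subset _ _)).insert hfrM, hNce, ?_, Or.inr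
          ⟨u', hu'Nim, hu'M, ?_, ?_⟩⟩
      · have h1 : ((u', v) : U × V) ∉ M.erase (u0, v) :=
          fun h => hu'M (Finset.mem_image.2 ⟨(u', v), Finset.mem_of_mem_erase h, rfl⟩)
        rw [Finset.insert_val_of_notMem h1, Finset.insert_val_of_notMem huvNe,
          Finset.erase_val, Finset.erase_val, swap_cons_add,
          Multiset.cons_erase heM, Multiset.cons_erase hu']
      · rw [Finset.image_insert, image_fst_erase hM heM]
      · rw [Finset.image_insert, image_fst_erase hN hu',
          Finset.erase_insert_of_ne (fun h => hne h.symm)]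
  · -- Case A: v is unmatched in N
    push_neg at hvN
    have hfrN : ∀ e ∈ N, e.1 ≠ ((u0, v) : U × V).1 ∧ e.2 ≠ ((u0, v) : U × V).2 := by
      intro e he
      refine ⟨fun h => huN (Finset.mem_image.2 ⟨e, he, h⟩), fun h => ?_⟩
      have h2 : (e.1, e.2) ∈ N := by simpa using he
      rw [h] at h2
      exact hvN e.1 h2
    refine ⟨M.erase (u0, v), insert (u0, v) N, hM.subset (Finset.erase_subset _ _),
      hN.insert hfrN, ?_, Or.inl ⟨image_fst_erase hM heM, by rw [Finset.image_insert]⟩⟩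
    rw [Finset.insert_val_of_notMem huvN, Finset.erase_val, move_cons _ heM]

end Stmt5Aux
theorem stmt5 {U V : Type*} [Fintype U] [Fintype V] [DecidableEq U] [DecidableEq V]
    (E : Finset (U × V)) (w : U × V → ℝ)
    (IsMatching : Finset (U × V) → Prop)
    (hMatch : ∀ M, IsMatching M ↔ M ⊆ E ∧
      (∀ e ∈ M, ∀ e' ∈ M, e.1 = e'.1 → e = e') ∧
      (∀ e ∈ M, ∀ e' ∈ M, e.2 = e'.2 → e = e'))
    (f : Finset U → EReal)
    (hf : ∀ X : Finset U, f X =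
      sSup ((fun M : Finset (U × V) => ((∑ e ∈ M, w e : ℝ) : EReal)) ''
        {M | IsMatching M ∧ M.image Prod.fst = X})) :
    ∀ X Y : Finset U, f X ≠ ⊥ → f Y ≠ ⊥ → ∀ u ∈ X \ Y,
      f X + f Y ≤ f (X.erase u) + f (insert u Y) ∨
      ∃ v ∈ Y \ X,
        f X + f Y ≤ f (insert v (X.erase u)) + f ((insert u Y).erase v) := by
  have attain : ∀ Z : Finset U, f Z ≠ ⊥ → ∃ M : Finset (U × V), IsMatching M ∧
      M.image Prod.fst = Z ∧ f Z = ((∑ e ∈ M, w e : ℝ) : EReal) := by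
    intro Z hZ
    set S := ((fun M : Finset (U × V) => ((∑ e ∈ M, w e : ℝ) : EReal)) ''
        {M | IsMatching M ∧ M.image Prod.fst = Z}) with hS
    have hfin : S.Finite := (Set.toFinite _).image _
    have hne : S.Nonempty := by
      by_contra h
      rw [Set.not_nonempty_iff_eq_empty] at h
      exact hZ (by rw [hf Z, ← hS, h, sSup_empty])
    obtain ⟨M, hM, hMw⟩ := hne.csSup_mem hfin
    exact ⟨M, hM.1, hM.2, by rw [hf Z, ← hS, ← hMw]⟩
  have lb : ∀ (Z : Finset U) (M : Finset (U × V)), IsMatching M → M.image Prod.fst = Z →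
      ((∑ e ∈ M, w e : ℝ) : EReal) ≤ f Z := by
    intro Z M hM hMZ
    rw [hf Z]
    exact le_sSup ⟨M, ⟨hM, hMZ⟩, rfl⟩
  intro X Y hX hY u huXY
  rw [Finset.mem_sdiff] at huXY
  obtain ⟨M, hMm, hMX, hfX⟩ := attain X hX
  obtain ⟨N, hNm, hNY, hfY⟩ := attain Y hY
  obtain ⟨hME, hM1, hM2⟩ := (hMatch M).1 hMm
  obtain ⟨hNE, hN1, hN2⟩ := (hMatch N).1 hNm
  have huM : u ∈ M.image Prod.fst := hMX ▸ huXY.1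
  have huN : u ∉ N.image Prod.fst := hNY ▸ huXY.2
  obtain ⟨M', N', hM', hN', hval, hcases⟩ :=
    Stmt5Aux.key _ M N rfl ⟨hM1, hM2⟩ ⟨hN1, hN2⟩ u huM huN
  have hsub : ∀ e : U × V, e ∈ M' ∨ e ∈ N' → e ∈ E := by
    rintro e he
    have hm : e ∈ M.val + N.val := by
      rw [← hval]
      exact Multiset.mem_add.2 (he.imp (fun h => h) (fun h => h))
    rcases Multiset.mem_add.1 hm with h | h
    · exact hME h
    · exact hNE h
  have hM'm : IsMatching M' :=
    (hMatch M').2 ⟨fun e he => hsub e (Or.inl he), hM'.1, hM'.2⟩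
  have hN'm : IsMatching N' :=
    (hMatch N').2 ⟨fun e he => hsub e (Or.inr he), hN'.1, hN'.2⟩
  have hw : (∑ e ∈ M', w e) + (∑ e ∈ N', w e) = (∑ e ∈ M, w e) + (∑ e ∈ N, w e) := by
    have h := congrArg (fun s : Multiset (U × V) => (Multiset.map w s).sum) hval
    simpa only [Multiset.map_add, Multiset.sum_add, ← Finset.sum_eq_multiset_sum] using h
  have hfXY : f X + f Y = ((((∑ e ∈ M', w e) + (∑ e ∈ N', w e)) : ℝ) : EReal) := by
    rw [hfX, hfY, ← EReal.coe_add, hw]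
  rcases hcases with ⟨h1, h2⟩ | ⟨z, hz1, hz2, h1, h2⟩
  · left
    have lb1 := lb (X.erase u) M' hM'm (by rw [h1, hMX])
    have lb2 := lb (insert u Y) N' hN'm (by rw [h2, hNY])
    calc f X + f Y = ((((∑ e ∈ M', w e) + (∑ e ∈ N', w e)) : ℝ) : EReal) := hfXY
    _ = ((∑ e ∈ M', w e : ℝ) : EReal) + ((∑ e ∈ N', w e : ℝ) : EReal) := EReal.coe_add _ _
    _ ≤ f (X.erase u) + f (insert u Y) := add_le_add lb1 lb2
  · right
    refine ⟨z, Finset.mem_sdiff.2 ⟨hNY ▸ hz1, fun h => hz2 (by rw [hMX]; exact h)⟩, ?_⟩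
    have lb1 := lb (insert z (X.erase u)) M' hM'm (by rw [h1, hMX])
    have lb2 := lb ((insert u Y).erase z) N' hN'm (by rw [h2, hNY])
    calc f X + f Y = ((((∑ e ∈ M', w e) + (∑ e ∈ N', w e)) : ℝ) : EReal) := hfXY
    _ = ((∑ e ∈ M', w e : ℝ) : EReal) + ((∑ e ∈ N', w e : ℝ) : EReal) := EReal.coe_add _ _
    _ ≤ f (insert z (X.erase u)) + f ((insert u Y).erase z) := add_le_add lb1 lb2
end

section
/- Let P = (N, ≼) be a finite poset of order n. Construct a bipartite graph G₀ with parts U = {u₁,…,uₙ}, V = {v₁,…,vₙ} and edges {uᵢ, vⱼ} for each pair with j ≼ i, weighted w₀({uᵢ,vⱼ}) = 0 if i = j and 1 otherwise. Define f₀(X) = max{ w₀(M) : M a matching with matched vertices in U equal to U_X }, where U_X = {uᵢ : i ∈ X}. Then f₀(X) = 0 if X is a lower set of P and f₀(X) > 0 otherwise. -/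
theorem stmt7 {α : Type*} [Fintype α] [PartialOrder α] [DecidableEq α]
    [DecidableRel ((· ≤ ·) : α → α → Prop)]
    (IsMatching : Finset (α × α) → Prop)
    (hMatch : ∀ M, IsMatching M ↔ (∀ e ∈ M, e.2 ≤ e.1) ∧
      (∀ e ∈ M, ∀ e' ∈ M, e.1 = e'.1 → e = e') ∧
      (∀ e ∈ M, ∀ e' ∈ M, e.2 = e'.2 → e = e'))
    (w₀ : Finset (α × α) → ℝ)
    (hw₀ : ∀ M, w₀ M = ∑ e ∈ M, (if e.1 = e.2 then (0 : ℝ) else 1))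
    (f₀ : Finset α → ℝ)
    (hf₀ : ∀ X : Finset α,
      f₀ X = sSup (w₀ '' {M | IsMatching M ∧ M.image Prod.fst = X})) :
    ∀ X : Finset α,
      (IsLowerSet (X : Set α) → f₀ X = 0) ∧ (¬ IsLowerSet (X : Set α) → 0 < f₀ X) := by
  intro X
  have hbdd : BddAbove (w₀ '' {M | IsMatching M ∧ M.image Prod.fst = X}) := by
    refine ⟨(Fintype.card (α × α) : ℝ), ?_⟩
    rintro y ⟨M, _, rfl⟩
    rw [hw₀]
    calc ∑ e ∈ M, (if e.1 = e.2 then (0 : ℝ) else 1)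
        ≤ ∑ _e ∈ M, (1 : ℝ) := Finset.sum_le_sum (fun e _ => by split <;> norm_num)
      _ = (M.card : ℝ) := by simp
      _ ≤ (Fintype.card (α × α) : ℝ) := by exact_mod_cast Finset.card_le_univ M
  constructor
  · -- lower set case
    intro hX
    have hzero : ∀ M, IsMatching M → M.image Prod.fst = X → w₀ M = 0 := by
      intro M hM hMX
      rw [hMatch] at hM
      obtain ⟨h1, h2, h3⟩ := hM
      have key : ∀ x : α, ∀ e ∈ M, e.1 = x → e.2 = e.1 := by
        intro x
        induction x using WellFoundedLT.induction with
        | _ x ih =>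
          intro e he hex
          by_contra hne
          have hlt : e.2 < e.1 := lt_of_le_of_ne (h1 e he) hne
          have he1X : e.1 ∈ X := by
            rw [← hMX]; exact Finset.mem_image_of_mem Prod.fst he
          have he2X : e.2 ∈ X := hX (h1 e he) he1X
          rw [← hMX] at he2X
          obtain ⟨e', he', he'1⟩ := Finset.mem_image.mp he2X
          have h4 : e'.2 = e'.1 := ih e.2 (hex ▸ hlt) e' he' he'1
          have h5 : e' = e := h3 e' he' e he (by rw [h4, he'1])
          subst h5
          exact hne he'1.symm
      rw [hw₀]
      apply Finset.sum_eq_zero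
      intro e he
      rw [if_pos (key e.1 e he rfl).symm]
    have hdiagM : IsMatching (X.image fun x => (x, x)) := by
      rw [hMatch]
      refine ⟨?_, ?_, ?_⟩
      · intro e he
        obtain ⟨a, _, rfl⟩ := Finset.mem_image.mp he
        exact le_refl a
      · intro e he e' he' h
        obtain ⟨a, _, rfl⟩ := Finset.mem_image.mp he
        obtain ⟨b, _, rfl⟩ := Finset.mem_image.mp he'
        simp only at h; subst h; rfl
      · intro e he e' he' h
        obtain ⟨a, _, rfl⟩ := Finset.mem_image.mp he
        obtain ⟨b, _, rfl⟩ := Finset.mem_image.mp he'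
        simp only at h; subst h; rfl
    have hdiagX : (X.image fun x => (x, x)).image Prod.fst = X := by
      rw [Finset.image_image]
      exact Finset.image_id
    rw [hf₀]
    have heq : w₀ '' {M | IsMatching M ∧ M.image Prod.fst = X} = {0} := by
      apply Set.eq_singleton_iff_unique_mem.mpr
      constructor
      · exact ⟨X.image fun x => (x, x), ⟨hdiagM, hdiagX⟩, hzero _ hdiagM hdiagX⟩
      · rintro y ⟨M, ⟨hM1, hM2⟩, rfl⟩
        exact hzero M hM1 hM2
    rw [heq, csSup_singleton]
  · -- not lower set case
    intro hX
    rw [hf₀]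
    unfold IsLowerSet at hX
    push_neg at hX
    obtain ⟨a, b, hba, haX, hbX⟩ := hX
    rw [Finset.mem_coe] at haX hbX
    have hab : b ≠ a := fun h => hbX (h ▸ haX)
    set M₁ : Finset (α × α) := insert (a, b) ((X.erase a).image fun z => (z, z)) with hM₁
    have hmem : ∀ e ∈ M₁, e = (a, b) ∨ (e.1 = e.2 ∧ e.1 ∈ X.erase a) := by
      intro e he
      rw [hM₁, Finset.mem_insert] at he
      rcases he with h | h
      · exact Or.inl h
      · obtain ⟨z, hz, rfl⟩ := Finset.mem_image.mp h
        exact Or.inr ⟨rfl, hz⟩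
    have hM₁match : IsMatching M₁ := by
      rw [hMatch]
      refine ⟨?_, ?_, ?_⟩
      · intro e he
        rcases hmem e he with h | ⟨h, _⟩
        · subst h; exact hba
        · rw [h]
      · intro e he e' he' h
        rcases hmem e he with h1 | ⟨h1, h1'⟩ <;> rcases hmem e' he' with h2 | ⟨h2, h2'⟩
        · rw [h1, h2]
        · exfalso; subst h1; rw [← h] at h2'
          exact (Finset.mem_erase.mp h2').1 rfl
        · exfalso; subst h2; rw [h] at h1'
          exact (Finset.mem_erase.mp h1').1 rfl
        · exact Prod.ext h (by rw [← h1, ← h2, h])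
      · intro e he e' he' h
        rcases hmem e he with h1 | ⟨h1, h1'⟩ <;> rcases hmem e' he' with h2 | ⟨h2, h2'⟩
        · rw [h1, h2]
        · exfalso; subst h1; apply hbX
          simp only at h
          have h6 : e'.1 = b := h2.trans h.symm
          rw [← h6]
          exact Finset.mem_of_mem_erase h2'
        · exfalso; subst h2; apply hbX
          simp only at h
          have h6 : e.1 = b := h1.trans h
          rw [← h6]
          exact Finset.mem_of_mem_erase h1'
        · exact Prod.ext (by rw [h1, h2, h]) h
    have hM₁X : M₁.image Prod.fst = X := by
      rw [hM₁, Finset.image_insert, Finset.image_image]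
      have : (X.erase a).image (Prod.fst ∘ fun z => (z, z)) = X.erase a :=
        Finset.image_id
      rw [this]
      exact Finset.insert_erase haX
    have hnotmem : (a, b) ∉ (X.erase a).image fun z => (z, z) := by
      intro h
      obtain ⟨z, hz, hz2⟩ := Finset.mem_image.mp h
      have : z = a := (Prod.ext_iff.mp hz2).1
      exact (Finset.mem_erase.mp hz).1 this
    have hw : w₀ M₁ = 1 := by
      rw [hw₀, hM₁, Finset.sum_insert hnotmem]
      have : ∑ e ∈ (X.erase a).image fun z => (z, z),
          (if e.1 = e.2 then (0 : ℝ) else 1) = 0 := by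
        apply Finset.sum_eq_zero
        intro e he
        obtain ⟨z, _, rfl⟩ := Finset.mem_image.mp he
        simp
      rw [this, if_neg (fun h => hab h.symm)]
      norm_num
    have h1mem : (1 : ℝ) ∈ w₀ '' {M | IsMatching M ∧ M.image Prod.fst = X} :=
      ⟨M₁, ⟨hM₁match, hM₁X⟩, hw⟩
    have := le_csSup hbdd h1mem
    linarith
end

section
/- Let P = (N, ≼) be a finite poset, X ⊆ N a lower set, and consider the bipartite graph G₀ on U = {uᵢ : i ∈ N}, V = {vⱼ : j ∈ N} with edges {uᵢ, vⱼ} whenever j ≼ i. Then the unique matching M with ∂M ∩ U = {uᵢ : i ∈ X} is the trivial matching {{uᵢ, vᵢ} : i ∈ X}. -/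
/-- Take an off-diagonal pair `(i, j)`, `j < i`, with `i` minimal. The pair `(j, k)` covering `j`
is diagonal by minimality, so it shares its second coordinate with `(i, j)`. -/
theorem Finset.snd_eq_fst_of_snd_le_fst {α : Type*} [PartialOrder α] (M : Finset (α × α))
    (hle : ∀ e ∈ M, e.2 ≤ e.1) (hinj : Set.InjOn Prod.snd (M : Set (α × α)))
    (hcovered : ∀ e ∈ M, ∃ e' ∈ M, e'.1 = e.2) : ∀ e ∈ M, e.2 = e.1 := by
  by_contra! hbad
  obtain ⟨e, ⟨he, hne⟩, hmin⟩ := Set.Finite.exists_minimalFor Prod.fst {e | e ∈ M ∧ e.2 ≠ e.1}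
    (M.finite_toSet.subset fun _ h => h.1) hbad
  have hlt : e.2 < e.1 := (hle e he).lt_of_ne hne
  obtain ⟨e', he', hcover⟩ := hcovered e he
  have hdiag' : e'.2 = e'.1 := by
    by_contra hne'
    exact (hcover ▸ hlt).not_ge (hmin ⟨he', hne'⟩ (hcover ▸ hlt.le))
  have he'_eq : e' = e := hinj he' he (hdiag'.trans hcover)
  exact hne (he'_eq ▸ hdiag')

theorem Finset.image_diag_image_fst {α : Type*} [DecidableEq α] (M : Finset (α × α))
    (hdiag : ∀ e ∈ M, e.2 = e.1) : (M.image Prod.fst).image (fun i => (i, i)) = M := by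
  rw [Finset.image_image]
  refine (Finset.image_congr fun e he => ?_).trans M.image_id
  exact Prod.ext rfl (hdiag e he).symm

theorem stmt8_general {α : Type*} [PartialOrder α] [DecidableEq α]
    (X : Finset α) (hX : IsLowerSet (X : Set α))
    (M : Finset (α × α))
    (hedges : ∀ e ∈ M, e.2 ≤ e.1)
    (hsnd : ∀ e ∈ M, ∀ e' ∈ M, e.2 = e'.2 → e = e')
    (hcov : M.image Prod.fst = X) :
    M = X.image (fun i => (i, i)) := by
  have hsnd_covered : ∀ e ∈ M, ∃ e' ∈ M, e'.1 = e.2 := by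
    intro e he
    have hfst : e.1 ∈ X := hcov ▸ Finset.mem_image_of_mem _ he
    simpa [← hcov] using hX (hedges e he) hfst
  rw [← hcov, Finset.image_diag_image_fst M
    (M.snd_eq_fst_of_snd_le_fst hedges (fun e he e' he' => hsnd e he e' he') hsnd_covered)]

theorem stmt8 {α : Type*} [Fintype α] [PartialOrder α] [DecidableEq α]
    (X : Finset α) (hX : IsLowerSet (X : Set α))
    (M : Finset (α × α))
    (hedges : ∀ e ∈ M, e.2 ≤ e.1)
    (hfst : ∀ e ∈ M, ∀ e' ∈ M, e.1 = e'.1 → e = e')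
    (hsnd : ∀ e ∈ M, ∀ e' ∈ M, e.2 = e'.2 → e = e')
    (hcov : M.image Prod.fst = X) :
    M = X.image (fun i => (i, i)) :=
  stmt8_general X hX M hedges hsnd hcov
end

section
/- Every M♮-concave set function f : 2^N → ℝ on a finite set N is submodular: f(X) + f(Y) ≥ f(X ∪ Y) + f(X ∩ Y) for all X, Y ⊆ N. -/
/-!
For `B ⊆ A` and `i ∈ A \ B` there is no `j ∈ B \ A` to exchange with, so M♮-concavity reduces to
`f A - f (A \ {i}) ≤ f (B ∪ {i}) - f B`: marginal gains diminish along inclusion. Submodularity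
follows by removing the elements of `Y \ X` from `Y` one at a time.
-/

namespace Finset

variable {α β : Type*} [DecidableEq α]

def IsMNatConcave [Add β] [LE β] (f : Finset α → β) : Prop :=
  ∀ X Y : Finset α, ∀ i ∈ X \ Y,
    f X + f Y ≤ f (X.erase i) + f (insert i Y) ∨
    ∃ j ∈ Y \ X, f X + f Y ≤ f (insert j (X.erase i)) + f ((insert i Y).erase j)

theorem IsMNatConcave.add_le_erase_add_insert_of_subset [Add β] [LE β] {f : Finset α → β}
    (hf : IsMNatConcave f) {A B : Finset α} (hBA : B ⊆ A) {i : α} (hiA : i ∈ A) (hiB : i ∉ B) :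
    f A + f B ≤ f (A.erase i) + f (insert i B) := by
  rcases hf A B i (mem_sdiff.2 ⟨hiA, hiB⟩) with h | ⟨j, hj, -⟩
  · exact h
  · exact absurd (hBA (mem_sdiff.1 hj).1) (mem_sdiff.1 hj).2

theorem union_add_inter_le_add_of_diminishing_returns [AddCommMonoid β] [PartialOrder β]
    [IsOrderedCancelAddMonoid β] {f : Finset α → β}
    (hf : ∀ ⦃A B : Finset α⦄, B ⊆ A → ∀ ⦃i⦄, i ∈ A → i ∉ B →
      f A + f B ≤ f (A.erase i) + f (insert i B))
    (X Y : Finset α) : f (X ∪ Y) + f (X ∩ Y) ≤ f X + f Y := by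
  induction Y using strongInduction with
  | _ Y ih =>
    by_cases hYX : Y ⊆ X
    · rw [union_eq_left.2 hYX, inter_eq_right.2 hYX]
    obtain ⟨i, hiY, hiX⟩ := not_subset.1 hYX
    have hunion : X ∪ Y.erase i = (X ∪ Y).erase i := by
      rw [erase_union_distrib, erase_eq_of_notMem hiX]
    have hinter : X ∩ Y.erase i = X ∩ Y := by
      rw [inter_erase, erase_eq_of_notMem fun h => hiX (mem_inter.1 h).1]
    have hexch := hf ((erase_subset i Y).trans subset_union_right) (mem_union_right X hiY)
      (notMem_erase i Y)
    rw [insert_erase hiY] at hexch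
    have hind := ih (Y.erase i) (erase_ssubset hiY)
    rw [hunion, hinter] at hind
    refine le_of_add_le_add_right (a := f ((X ∪ Y).erase i) + f (Y.erase i)) ?_
    calc f (X ∪ Y) + f (X ∩ Y) + (f ((X ∪ Y).erase i) + f (Y.erase i))
        = (f (X ∪ Y) + f (Y.erase i)) + (f ((X ∪ Y).erase i) + f (X ∩ Y)) := by abel
      _ ≤ (f ((X ∪ Y).erase i) + f Y) + (f X + f (Y.erase i)) := add_le_add hexch hind
      _ = f X + f Y + (f ((X ∪ Y).erase i) + f (Y.erase i)) := by abel

end Finset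

theorem stmt13_general {α : Type*} [DecidableEq α] (f : Finset α → ℝ)
    (hM : ∀ X Y : Finset α, ∀ i ∈ X \ Y,
      f X + f Y ≤ f (X.erase i) + f (insert i Y) ∨
      ∃ j ∈ Y \ X,
        f X + f Y ≤ f (insert j (X.erase i)) + f ((insert i Y).erase j)) :
    ∀ X Y : Finset α, f X + f Y ≥ f (X ∪ Y) + f (X ∩ Y) := by
  have hf : Finset.IsMNatConcave f := hM
  exact Finset.union_add_inter_le_add_of_diminishing_returns
    fun _ _ hBA _ hiA hiB => hf.add_le_erase_add_insert_of_subset hBA hiA hiB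

theorem stmt13 {α : Type*} [Fintype α] [DecidableEq α] (f : Finset α → ℝ)
    (hM : ∀ X Y : Finset α, ∀ i ∈ X \ Y,
      f X + f Y ≤ f (X.erase i) + f (insert i Y) ∨
      ∃ j ∈ Y \ X,
        f X + f Y ≤ f (insert j (X.erase i)) + f ((insert i Y).erase j)) :
    ∀ X Y : Finset α, f X + f Y ≥ f (X ∪ Y) + f (X ∩ Y) :=
  stmt13_general f hM
end

section
/- Let M_X and M_Y be matchings in a bipartite graph G = (U, V; E), and let u ∈ U be covered by M_X but not by M_Y. Consider the maximal alternating path P in the symmetric difference M_X △ M_Y starting at u, with other endpoint v. Then M := (M_X \ P) ∪ (M_Y ∩ P) and M′ := (M_Y \ P) ∪ (M_X ∩ P) are matchings with w(M) + w(M′) = w(M_X) + w(M_Y), and: if v ∈ V then ∂M ∩ U = (∂M_X ∩ U) \ {u} and ∂M′ ∩ U = (∂M_Y ∩ U) ∪ {u}; if v ∈ U then ∂M ∩ U = ((∂M_X ∩ U) \ {u}) ∪ {v} and ∂M′ ∩ U = ((∂M_Y ∩ U) ∪ {u}) \ {v}. -/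
open Finset
lemma three_leaves {U V : Type*} [DecidableEq U] [DecidableEq V] :
    ∀ (n : ℕ) (S : Finset (U × V)),
    S.card = n →
    (∀ x : U ⊕ V, (S.filter (fun e => Sum.inl e.1 = x ∨ Sum.inr e.2 = x)).card ≤ 2) →
    (∀ Q ⊆ S, Q.Nonempty → Q ≠ S → ∃ e ∈ Q, ∃ e' ∈ S \ Q, e.1 = e'.1 ∨ e.2 = e'.2) →
    ∀ x0 y z : U ⊕ V, x0 ≠ y → x0 ≠ z → y ≠ z →
    (S.filter (fun e => Sum.inl e.1 = x0 ∨ Sum.inr e.2 = x0)).card = 1 →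
    (S.filter (fun e => Sum.inl e.1 = y ∨ Sum.inr e.2 = y)).card = 1 →
    (S.filter (fun e => Sum.inl e.1 = z ∨ Sum.inr e.2 = z)).card = 1 →
    False := by
  intro n
  induction n using Nat.strong_induction_on with
  | _ n IH =>
    intro S hcard hdeg hconn x0 y z hxy hxz hyz h0 h1 h2
    obtain ⟨e, he⟩ := Finset.card_eq_one.mp h0
    have hemem : e ∈ S.filter (fun e => Sum.inl e.1 = x0 ∨ Sum.inr e.2 = x0) := by
      rw [he]; exact mem_singleton_self e
    have heS : e ∈ S := (mem_filter.mp hemem).1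
    have hex0 : Sum.inl e.1 = x0 ∨ Sum.inr e.2 = x0 := (mem_filter.mp hemem).2
    have huniq0 : ∀ f ∈ S, (Sum.inl f.1 = x0 ∨ Sum.inr f.2 = x0) → f = e := by
      intro f hf hfi
      have : f ∈ S.filter (fun e => Sum.inl e.1 = x0 ∨ Sum.inr e.2 = x0) :=
        mem_filter.mpr ⟨hf, hfi⟩
      rw [he] at this; exact mem_singleton.mp this
    obtain ⟨w, hwx0, hew, hcov⟩ : ∃ w : U ⊕ V, w ≠ x0 ∧
        (Sum.inl e.1 = w ∨ Sum.inr e.2 = w) ∧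
        ∀ t : U ⊕ V, (Sum.inl e.1 = t ∨ Sum.inr e.2 = t) → t = x0 ∨ t = w := by
      rcases hex0 with h | h
      · refine ⟨Sum.inr e.2, by rw [← h]; simp, Or.inr rfl, ?_⟩
        rintro t (rfl | rfl)
        · exact Or.inl h
        · exact Or.inr rfl
      · refine ⟨Sum.inl e.1, by rw [← h]; simp, Or.inl rfl, ?_⟩
        rintro t (rfl | rfl)
        · exact Or.inr rfl
        · exact Or.inl h
    have hewmem : e ∈ S.filter (fun f => Sum.inl f.1 = w ∨ Sum.inr f.2 = w) :=
      mem_filter.mpr ⟨heS, hew⟩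
    have hdw1 : 1 ≤ (S.filter (fun f => Sum.inl f.1 = w ∨ Sum.inr f.2 = w)).card :=
      Finset.card_pos.mpr ⟨e, hewmem⟩
    have hdw2 := hdeg w
    rcases (by omega : (S.filter (fun f => Sum.inl f.1 = w ∨ Sum.inr f.2 = w)).card = 1 ∨
        (S.filter (fun f => Sum.inl f.1 = w ∨ Sum.inr f.2 = w)).card = 2) with hdw | hdw
    · -- deg w = 1 : S = {e}, then y = z = w, contradiction
      have huniqw : ∀ f ∈ S, (Sum.inl f.1 = w ∨ Sum.inr f.2 = w) → f = e := by
        intro f hf hfi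
        have hfmem : f ∈ S.filter (fun f => Sum.inl f.1 = w ∨ Sum.inr f.2 = w) :=
          mem_filter.mpr ⟨hf, hfi⟩
        obtain ⟨a, ha⟩ := Finset.card_eq_one.mp hdw
        rw [ha] at hfmem hewmem
        rw [mem_singleton.mp hfmem, mem_singleton.mp hewmem]
      have hSe : S = {e} := by
        by_contra hne
        obtain ⟨f, hfQ, f', hf'sd, hadj⟩ := hconn {e} (singleton_subset_iff.mpr heS)
          ⟨e, mem_singleton_self e⟩ (fun h => hne h.symm)
        have hf : f = e := mem_singleton.mp hfQ
        rw [hf] at hadj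
        have hf'S : f' ∈ S := (mem_sdiff.mp hf'sd).1
        have hf'ne : f' ≠ e := fun h => (mem_sdiff.mp hf'sd).2 (h ▸ mem_singleton_self e)
        rcases hadj with h | h
        · rcases hcov (Sum.inl f'.1) (Or.inl (by rw [h])) with hx | hw'
          · exact hf'ne (huniq0 f' hf'S (Or.inl hx))
          · exact hf'ne (huniqw f' hf'S (Or.inl hw'))
        · rcases hcov (Sum.inr f'.2) (Or.inr (by rw [h])) with hx | hw'
          · exact hf'ne (huniq0 f' hf'S (Or.inr hx))
          · exact hf'ne (huniqw f' hf'S (Or.inr hw'))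
      have hy : y = w := by
        have h1' := h1
        rw [hSe] at h1'
        have : e ∈ ({e} : Finset (U × V)).filter (fun f => Sum.inl f.1 = y ∨ Sum.inr f.2 = y) := by
          have hne : (({e} : Finset (U × V)).filter
              (fun f => Sum.inl f.1 = y ∨ Sum.inr f.2 = y)).Nonempty :=
            Finset.card_pos.mp (by omega)
          obtain ⟨g, hg⟩ := hne
          have := mem_filter.mp hg
          rwa [mem_singleton.mp this.1] at hg
        have hinc := (mem_filter.mp this).2
        rcases hcov y hinc with h | h
        · exact absurd h.symm hxy
        · exact h
      have hz : z = w := by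
        have h2' := h2
        rw [hSe] at h2'
        have : e ∈ ({e} : Finset (U × V)).filter (fun f => Sum.inl f.1 = z ∨ Sum.inr f.2 = z) := by
          have hne : (({e} : Finset (U × V)).filter
              (fun f => Sum.inl f.1 = z ∨ Sum.inr f.2 = z)).Nonempty :=
            Finset.card_pos.mp (by omega)
          obtain ⟨g, hg⟩ := hne
          have := mem_filter.mp hg
          rwa [mem_singleton.mp this.1] at hg
        have hinc := (mem_filter.mp this).2
        rcases hcov z hinc with h | h
        · exact absurd h.symm hxz
        · exact h
      exact hyz (hy.trans hz.symm)
    · -- deg w = 2 : remove e and induct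
      have hn1 : 1 ≤ n := by
        have : 0 < S.card := Finset.card_pos.mpr ⟨e, heS⟩
        omega
      have hcard' : (S.erase e).card = n - 1 := by
        rw [Finset.card_erase_of_mem heS, hcard]
      have hdeg' : ∀ x : U ⊕ V,
          ((S.erase e).filter (fun f => Sum.inl f.1 = x ∨ Sum.inr f.2 = x)).card ≤ 2 := by
        intro x
        exact le_trans (Finset.card_le_card
          (Finset.filter_subset_filter _ (Finset.erase_subset e S))) (hdeg x)
      have hadjw : ∀ f ∈ S, f ≠ e → (f.1 = e.1 ∨ f.2 = e.2) →
          (Sum.inl f.1 = w ∨ Sum.inr f.2 = w) := by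
        intro f hf hfe hadj
        rcases hadj with h | h
        · rcases hcov (Sum.inl f.1) (Or.inl (by rw [h])) with hx | hw'
          · exact absurd (huniq0 f hf (Or.inl hx)) hfe
          · exact Or.inl hw'
        · rcases hcov (Sum.inr f.2) (Or.inr (by rw [h])) with hx | hw'
          · exact absurd (huniq0 f hf (Or.inr hx)) hfe
          · exact Or.inr hw'
      have hconn' : ∀ Q ⊆ S.erase e, Q.Nonempty → Q ≠ S.erase e →
          ∃ f ∈ Q, ∃ f' ∈ (S.erase e) \ Q, f.1 = f'.1 ∨ f.2 = f'.2 := by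
        intro Q hQ hQne hQS'
        have hQS : Q ⊆ S := hQ.trans (Finset.erase_subset e S)
        have heQ : e ∉ Q := fun h => (Finset.notMem_erase e S) (hQ h)
        have hQneS : Q ≠ S := fun h => heQ (h ▸ heS)
        obtain ⟨f, hfQ, f', hf'sd, hadj⟩ := hconn Q hQS hQne hQneS
        have hf'S : f' ∈ S := (mem_sdiff.mp hf'sd).1
        have hf'Q : f' ∉ Q := (mem_sdiff.mp hf'sd).2
        by_cases hfe' : f' = e
        · subst hfe'
          have hffne : f ≠ f' := fun h => heQ (h ▸ hfQ)
          have hfw : Sum.inl f.1 = w ∨ Sum.inr f.2 = w := hadjw f (hQS hfQ) hffne hadj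
          obtain ⟨g, hg⟩ : ∃ g, g ∈ (S.erase f') \ Q := by
            obtain ⟨g, hgS', hgQ⟩ := Finset.exists_of_ssubset (hQ.ssubset_of_ne hQS')
            exact ⟨g, mem_sdiff.mpr ⟨hgS', hgQ⟩⟩
          have hgS' : g ∈ S.erase f' := (mem_sdiff.mp hg).1
          have hgQ : g ∉ Q := (mem_sdiff.mp hg).2
          have hQ'S : insert f' Q ⊆ S := Finset.insert_subset hf'S hQS
          have hQ'S'ne : insert f' Q ≠ S := by
            intro h
            have : g ∈ insert f' Q := by rw [h]; exact (Finset.erase_subset f' S) hgS'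
            rcases Finset.mem_insert.mp this with h' | h'
            · exact (Finset.mem_erase.mp hgS').1 h'
            · exact hgQ h'
          obtain ⟨f2, hf2, f2', hf2'sd, hadj2⟩ := hconn (insert f' Q) hQ'S
            ⟨f', Finset.mem_insert_self f' Q⟩ hQ'S'ne
          have hf2'S : f2' ∈ S := (mem_sdiff.mp hf2'sd).1
          have hf2'nQ' : f2' ∉ insert f' Q := (mem_sdiff.mp hf2'sd).2
          have hf2'e : f2' ≠ f' := fun h => hf2'nQ' (h ▸ Finset.mem_insert_self f' Q)
          have hf2'Q : f2' ∉ Q := fun h => hf2'nQ' (Finset.mem_insert_of_mem h)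
          by_cases hf2e : f2 = f'
          · subst hf2e
            have hf2'w : Sum.inl f2'.1 = w ∨ Sum.inr f2'.2 = w := by
              apply hadjw f2' hf2'S hf2'e
              rcases hadj2 with h | h
              · exact Or.inl h.symm
              · exact Or.inr h.symm
            -- three distinct edges at w : f2 (= e), f, f2'
            exfalso
            have hsub : ({f2, f, f2'} : Finset (U × V)) ⊆
                S.filter (fun f => Sum.inl f.1 = w ∨ Sum.inr f.2 = w) := by
              intro t ht
              rcases Finset.mem_insert.mp ht with rfl | ht
              · exact mem_filter.mpr ⟨heS, hew⟩
              rcases Finset.mem_insert.mp ht with rfl | ht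
              · exact mem_filter.mpr ⟨hQS hfQ, hfw⟩
              · rw [Finset.mem_singleton.mp ht]
                exact mem_filter.mpr ⟨hf2'S, hf2'w⟩
            have hne1 : f2 ≠ f := fun h => hffne h.symm
            have hne2 : f2 ≠ f2' := fun h => hf2'e h.symm
            have hne3 : f ≠ f2' := fun h => hf2'Q (h ▸ hfQ)
            have hc3 : ({f2, f, f2'} : Finset (U × V)).card = 3 := by
              rw [Finset.card_insert_of_notMem, Finset.card_insert_of_notMem,
                Finset.card_singleton]
              · simp [hne3]
              · simp [hne1, hne2]
            have := Finset.card_le_card hsub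
            rw [hc3] at this
            omega
          · have hf2Q : f2 ∈ Q := (Finset.mem_insert.mp hf2).resolve_left hf2e
            exact ⟨f2, hf2Q, f2', mem_sdiff.mpr
              ⟨Finset.mem_erase.mpr ⟨hf2'e, hf2'S⟩, hf2'Q⟩, hadj2⟩
        · exact ⟨f, hfQ, f', mem_sdiff.mpr ⟨Finset.mem_erase.mpr ⟨hfe', hf'S⟩, hf'Q⟩, hadj⟩
      have hfilter_erase : ∀ (p : U × V → Prop) [DecidablePred p],
          (S.erase e).filter p = (S.filter p).erase e := by
        intro p _
        ext t
        simp only [mem_filter, Finset.mem_erase]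
        tauto
      have hdw' : ((S.erase e).filter (fun f => Sum.inl f.1 = w ∨ Sum.inr f.2 = w)).card = 1 := by
        rw [hfilter_erase, Finset.card_erase_of_mem hewmem, hdw]
      have hyw : y ≠ w := by
        intro h; rw [h] at h1; omega
      have hzw : z ≠ w := by
        intro h; rw [h] at h2; omega
      have hnoty : e ∉ S.filter (fun f => Sum.inl f.1 = y ∨ Sum.inr f.2 = y) := by
        intro hmem
        rcases hcov y (mem_filter.mp hmem).2 with h | h
        · exact hxy h.symm
        · exact hyw h
      have hnotz : e ∉ S.filter (fun f => Sum.inl f.1 = z ∨ Sum.inr f.2 = z) := by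
        intro hmem
        rcases hcov z (mem_filter.mp hmem).2 with h | h
        · exact hxz h.symm
        · exact hzw h
      have hy' : ((S.erase e).filter (fun f => Sum.inl f.1 = y ∨ Sum.inr f.2 = y)).card = 1 := by
        rw [hfilter_erase, Finset.erase_eq_of_notMem hnoty, h1]
      have hz' : ((S.erase e).filter (fun f => Sum.inl f.1 = z ∨ Sum.inr f.2 = z)).card = 1 := by
        rw [hfilter_erase, Finset.erase_eq_of_notMem hnotz, h2]
      exact IH (n - 1) (by omega) (S.erase e) hcard' hdeg' hconn' w y z
        (fun h => hyw h.symm) (fun h => hzw h.symm) hyz hdw' hy' hz'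

theorem stmt17 {U V : Type*} [Fintype U] [Fintype V] [DecidableEq U] [DecidableEq V]
    (E : Finset (U × V)) (w : U × V → ℝ)
    (IsMatching : Finset (U × V) → Prop)
    (hMatch : ∀ M, IsMatching M ↔ M ⊆ E ∧
      (∀ e ∈ M, ∀ e' ∈ M, e.1 = e'.1 → e = e') ∧
      (∀ e ∈ M, ∀ e' ∈ M, e.2 = e'.2 → e = e'))
    (MX MY : Finset (U × V)) (hMX : IsMatching MX) (hMY : IsMatching MY)
    (u : U) (hu : u ∈ MX.image Prod.fst) (hu' : u ∉ MY.image Prod.fst)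
    -- P is the maximal alternating path in the symmetric difference MX △ MY starting at u:
    (P : Finset (U × V))
    (hPD : P ⊆ (MX ∪ MY) \ (MX ∩ MY))
    -- P is closed under adjacency within the symmetric difference (a whole component),
    (hclosed : ∀ e ∈ P, ∀ e' ∈ (MX ∪ MY) \ (MX ∩ MY),
      (e.1 = e'.1 ∨ e.2 = e'.2) → e' ∈ P)
    -- P is connected,
    (hconn : ∀ Q ⊆ P, Q.Nonempty → Q ≠ P →
      ∃ e ∈ Q, ∃ e' ∈ P \ Q, e.1 = e'.1 ∨ e.2 = e'.2)
    -- u is an endpoint of P (degree 1),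
    (hustart : (P.filter (fun e => e.1 = u)).card = 1)
    -- v, the other endpoint of P, has degree 1 in P and differs from u:
    (v : U ⊕ V)
    (hvend : (P.filter (fun e => Sum.inl e.1 = v ∨ Sum.inr e.2 = v)).card = 1)
    (hvu : v ≠ Sum.inl u) :
    IsMatching ((MX \ P) ∪ (MY ∩ P)) ∧ IsMatching ((MY \ P) ∪ (MX ∩ P)) ∧
    (∑ e ∈ (MX \ P) ∪ (MY ∩ P), w e) + (∑ e ∈ (MY \ P) ∪ (MX ∩ P), w e)
        = (∑ e ∈ MX, w e) + (∑ e ∈ MY, w e) ∧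
    (∀ b : V, v = Sum.inr b →
      ((MX \ P) ∪ (MY ∩ P)).image Prod.fst = (MX.image Prod.fst).erase u ∧
      ((MY \ P) ∪ (MX ∩ P)).image Prod.fst = insert u (MY.image Prod.fst)) ∧
    (∀ a : U, v = Sum.inl a →
      ((MX \ P) ∪ (MY ∩ P)).image Prod.fst = insert a ((MX.image Prod.fst).erase u) ∧
      ((MY \ P) ∪ (MX ∩ P)).image Prod.fst = (insert u (MY.image Prod.fst)).erase a) := by
  rw [hMatch] at hMX hMY
  obtain ⟨hMXE, hMX1, hMX2⟩ := hMX
  obtain ⟨hMYE, hMY1, hMY2⟩ := hMY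
  have hPU : ∀ e ∈ P, e ∈ MX ∪ MY := fun e he => (Finset.mem_sdiff.mp (hPD he)).1
  have hPI : ∀ e ∈ P, e ∉ MX ∩ MY := fun e he => (Finset.mem_sdiff.mp (hPD he)).2
  -- strengthened closure
  have hP2 : ∀ e ∈ P, ∀ e' , e' ∈ MX ∪ MY → (e.1 = e'.1 ∨ e.2 = e'.2) → e' ∈ P := by
    intro e he e' he' hadj
    by_cases hin : e' ∈ MX ∩ MY
    · exfalso
      have hin1 := (Finset.mem_inter.mp hin).1
      have hin2 := (Finset.mem_inter.mp hin).2
      rcases Finset.mem_union.mp (hPU e he) with hX | hY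
      · rcases hadj with h | h
        · exact hPI e he ((hMX1 e hX e' hin1 h) ▸ hin)
        · exact hPI e he ((hMX2 e hX e' hin1 h) ▸ hin)
      · rcases hadj with h | h
        · exact hPI e he ((hMY1 e hY e' hin2 h) ▸ hin)
        · exact hPI e he ((hMY2 e hY e' hin2 h) ▸ hin)
    · exact hclosed e he e' (Finset.mem_sdiff.mpr ⟨he', hin⟩) hadj
  -- degree bound ≤ 2
  have hdeg : ∀ x : U ⊕ V,
      (P.filter (fun e => Sum.inl e.1 = x ∨ Sum.inr e.2 = x)).card ≤ 2 := by
    intro x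
    have hsub : P.filter (fun e => Sum.inl e.1 = x ∨ Sum.inr e.2 = x) ⊆
        (MX.filter (fun e => Sum.inl e.1 = x ∨ Sum.inr e.2 = x)) ∪
        (MY.filter (fun e => Sum.inl e.1 = x ∨ Sum.inr e.2 = x)) := by
      intro f hf
      have h1 := mem_filter.mp hf
      rcases Finset.mem_union.mp (hPU f h1.1) with h | h
      · exact Finset.mem_union_left _ (mem_filter.mpr ⟨h, h1.2⟩)
      · exact Finset.mem_union_right _ (mem_filter.mpr ⟨h, h1.2⟩)
    have hX1 : (MX.filter (fun e => Sum.inl e.1 = x ∨ Sum.inr e.2 = x)).card ≤ 1 := by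
      apply Finset.card_le_one.mpr
      intro a ha b hb
      have ha' := mem_filter.mp ha
      have hb' := mem_filter.mp hb
      cases x with
      | inl t =>
        have ha1 : a.1 = t := by simpa using ha'.2
        have hb1 : b.1 = t := by simpa using hb'.2
        exact hMX1 a ha'.1 b hb'.1 (ha1.trans hb1.symm)
      | inr t =>
        have ha1 : a.2 = t := by simpa using ha'.2
        have hb1 : b.2 = t := by simpa using hb'.2
        exact hMX2 a ha'.1 b hb'.1 (ha1.trans hb1.symm)
    have hY1 : (MY.filter (fun e => Sum.inl e.1 = x ∨ Sum.inr e.2 = x)).card ≤ 1 := by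
      apply Finset.card_le_one.mpr
      intro a ha b hb
      have ha' := mem_filter.mp ha
      have hb' := mem_filter.mp hb
      cases x with
      | inl t =>
        have ha1 : a.1 = t := by simpa using ha'.2
        have hb1 : b.1 = t := by simpa using hb'.2
        exact hMY1 a ha'.1 b hb'.1 (ha1.trans hb1.symm)
      | inr t =>
        have ha1 : a.2 = t := by simpa using ha'.2
        have hb1 : b.2 = t := by simpa using hb'.2
        exact hMY2 a ha'.1 b hb'.1 (ha1.trans hb1.symm)
    calc (P.filter (fun e => Sum.inl e.1 = x ∨ Sum.inr e.2 = x)).card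
        ≤ _ := Finset.card_le_card hsub
      _ ≤ _ + _ := Finset.card_union_le _ _
      _ ≤ 2 := by omega
  -- degree of u (as a Sum vertex)
  have hdegu : (P.filter (fun e => Sum.inl e.1 = (Sum.inl u : U ⊕ V) ∨ Sum.inr e.2 = (Sum.inl u : U ⊕ V))).card
      = 1 := by
    have heq : P.filter (fun e => Sum.inl e.1 = (Sum.inl u : U ⊕ V) ∨ Sum.inr e.2 = (Sum.inl u : U ⊕ V))
        = P.filter (fun e => e.1 = u) := by
      apply Finset.filter_congr
      intro e he
      simp
    rw [heq]
    exact hustart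
  -- every P-covered vertex other than inl u and v has degree 2
  have hdeg2 : ∀ x : U ⊕ V, x ≠ Sum.inl u → x ≠ v →
      (∃ e ∈ P, Sum.inl e.1 = x ∨ Sum.inr e.2 = x) →
      (P.filter (fun e => Sum.inl e.1 = x ∨ Sum.inr e.2 = x)).card = 2 := by
    rintro x hx1 hx2 ⟨e, he, hinc⟩
    have hp1 : 1 ≤ (P.filter (fun e => Sum.inl e.1 = x ∨ Sum.inr e.2 = x)).card :=
      Finset.card_pos.mpr ⟨e, mem_filter.mpr ⟨he, hinc⟩⟩
    have hp2 := hdeg x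
    by_contra hne
    exact three_leaves P.card P rfl hdeg hconn (Sum.inl u) v x (Ne.symm hvu)
      (Ne.symm hx1) (Ne.symm hx2) hdegu hvend (by omega)
  -- both an MX and an MY edge at deg-2 vertices (U side)
  have hboth : ∀ a : U, a ≠ u → Sum.inl a ≠ v → (∃ e ∈ P, e.1 = a) →
      (∃ ex ∈ P, ex ∈ MX ∧ ex.1 = a) ∧ (∃ ey ∈ P, ey ∈ MY ∧ ey.1 = a) := by
    rintro a h1 h2 ⟨e, he, hea⟩
    have hc := hdeg2 (Sum.inl a) (by simpa using h1) h2 ⟨e, he, Or.inl (by rw [hea])⟩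
    obtain ⟨e1, e2, hne, hfe⟩ := Finset.card_eq_two.mp hc
    have he1 : e1 ∈ P ∧ e1.1 = a := by
      have : e1 ∈ P.filter (fun e => Sum.inl e.1 = (Sum.inl a : U ⊕ V) ∨ Sum.inr e.2 = (Sum.inl a : U ⊕ V)) := by
        rw [hfe]; exact Finset.mem_insert_self _ _
      have h' := mem_filter.mp this
      exact ⟨h'.1, by simpa using h'.2⟩
    have he2 : e2 ∈ P ∧ e2.1 = a := by
      have : e2 ∈ P.filter (fun e => Sum.inl e.1 = (Sum.inl a : U ⊕ V) ∨ Sum.inr e.2 = (Sum.inl a : U ⊕ V)) := by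
        rw [hfe]; exact Finset.mem_insert_of_mem (Finset.mem_singleton_self _)
      have h' := mem_filter.mp this
      exact ⟨h'.1, by simpa using h'.2⟩
    rcases Finset.mem_union.mp (hPU e1 he1.1) with hx1 | hy1 <;>
      rcases Finset.mem_union.mp (hPU e2 he2.1) with hx2 | hy2
    · exact absurd (hMX1 e1 hx1 e2 hx2 (he1.2.trans he2.2.symm)) hne
    · exact ⟨⟨e1, he1.1, hx1, he1.2⟩, ⟨e2, he2.1, hy2, he2.2⟩⟩
    · exact ⟨⟨e2, he2.1, hx2, he2.2⟩, ⟨e1, he1.1, hy1, he1.2⟩⟩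
    · exact absurd (hMY1 e1 hy1 e2 hy2 (he1.2.trans he2.2.symm)) hne
  -- V-side version
  have hbothV : ∀ b : V, Sum.inr b ≠ v → (∃ e ∈ P, e.2 = b) →
      (∃ ex ∈ P, ex ∈ MX ∧ ex.2 = b) ∧ (∃ ey ∈ P, ey ∈ MY ∧ ey.2 = b) := by
    rintro b h2 ⟨e, he, heb⟩
    have hc := hdeg2 (Sum.inr b) (by simp) h2 ⟨e, he, Or.inr (by rw [heb])⟩
    obtain ⟨e1, e2, hne, hfe⟩ := Finset.card_eq_two.mp hc
    have he1 : e1 ∈ P ∧ e1.2 = b := by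
      have : e1 ∈ P.filter (fun e => Sum.inl e.1 = (Sum.inr b : U ⊕ V) ∨ Sum.inr e.2 = (Sum.inr b : U ⊕ V)) := by
        rw [hfe]; exact Finset.mem_insert_self _ _
      have h' := mem_filter.mp this
      exact ⟨h'.1, by simpa using h'.2⟩
    have he2 : e2 ∈ P ∧ e2.2 = b := by
      have : e2 ∈ P.filter (fun e => Sum.inl e.1 = (Sum.inr b : U ⊕ V) ∨ Sum.inr e.2 = (Sum.inr b : U ⊕ V)) := by
        rw [hfe]; exact Finset.mem_insert_of_mem (Finset.mem_singleton_self _)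
      have h' := mem_filter.mp this
      exact ⟨h'.1, by simpa using h'.2⟩
    rcases Finset.mem_union.mp (hPU e1 he1.1) with hx1 | hy1 <;>
      rcases Finset.mem_union.mp (hPU e2 he2.1) with hx2 | hy2
    · exact absurd (hMX2 e1 hx1 e2 hx2 (he1.2.trans he2.2.symm)) hne
    · exact ⟨⟨e1, he1.1, hx1, he1.2⟩, ⟨e2, he2.1, hy2, he2.2⟩⟩
    · exact ⟨⟨e2, he2.1, hx2, he2.2⟩, ⟨e1, he1.1, hy1, he1.2⟩⟩
    · exact absurd (hMY2 e1 hy1 e2 hy2 (he1.2.trans he2.2.symm)) hne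
  -- the edge at u
  obtain ⟨eu, heu⟩ := Finset.card_eq_one.mp hustart
  have heuP : eu ∈ P := by
    have : eu ∈ P.filter (fun e => e.1 = u) := by rw [heu]; exact mem_singleton_self eu
    exact (mem_filter.mp this).1
  have heuu : eu.1 = u := by
    have : eu ∈ P.filter (fun e => e.1 = u) := by rw [heu]; exact mem_singleton_self eu
    exact (mem_filter.mp this).2
  have heuX : eu ∈ MX := by
    rcases Finset.mem_union.mp (hPU eu heuP) with h | h
    · exact h
    · exact absurd (Finset.mem_image.mpr ⟨eu, h, heuu⟩) hu'
  have hMXu : ∀ f ∈ MX, f.1 = u → f = eu := by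
    intro f hf hfu
    have hfP : f ∈ P := hP2 eu heuP f (Finset.mem_union_left _ hf)
      (Or.inl (heuu.trans hfu.symm))
    have : f ∈ P.filter (fun e => e.1 = u) := mem_filter.mpr ⟨hfP, hfu⟩
    rw [heu] at this; exact mem_singleton.mp this
    -- matching M
  have hMmatch : IsMatching ((MX \ P) ∪ (MY ∩ P)) := by
    rw [hMatch]
    refine ⟨?_, ?_, ?_⟩
    · intro e he
      rcases Finset.mem_union.mp he with h | h
      · exact hMXE (Finset.mem_sdiff.mp h).1
      · exact hMYE (Finset.mem_inter.mp h).1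
    · intro e he e' he' h
      rcases Finset.mem_union.mp he with h1 | h1 <;> rcases Finset.mem_union.mp he' with h2 | h2
      · exact hMX1 e (Finset.mem_sdiff.mp h1).1 e' (Finset.mem_sdiff.mp h2).1 h
      · exact absurd (hP2 e' (Finset.mem_inter.mp h2).2 e
          (Finset.mem_union_left _ (Finset.mem_sdiff.mp h1).1) (Or.inl h.symm))
          (Finset.mem_sdiff.mp h1).2
      · exact absurd (hP2 e (Finset.mem_inter.mp h1).2 e'
          (Finset.mem_union_left _ (Finset.mem_sdiff.mp h2).1) (Or.inl h))
          (Finset.mem_sdiff.mp h2).2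
      · exact hMY1 e (Finset.mem_inter.mp h1).1 e' (Finset.mem_inter.mp h2).1 h
    · intro e he e' he' h
      rcases Finset.mem_union.mp he with h1 | h1 <;> rcases Finset.mem_union.mp he' with h2 | h2
      · exact hMX2 e (Finset.mem_sdiff.mp h1).1 e' (Finset.mem_sdiff.mp h2).1 h
      · exact absurd (hP2 e' (Finset.mem_inter.mp h2).2 e
          (Finset.mem_union_left _ (Finset.mem_sdiff.mp h1).1) (Or.inr h.symm))
          (Finset.mem_sdiff.mp h1).2
      · exact absurd (hP2 e (Finset.mem_inter.mp h1).2 e'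
          (Finset.mem_union_left _ (Finset.mem_sdiff.mp h2).1) (Or.inr h))
          (Finset.mem_sdiff.mp h2).2
      · exact hMY2 e (Finset.mem_inter.mp h1).1 e' (Finset.mem_inter.mp h2).1 h
  have hM'match : IsMatching ((MY \ P) ∪ (MX ∩ P)) := by
    rw [hMatch]
    refine ⟨?_, ?_, ?_⟩
    · intro e he
      rcases Finset.mem_union.mp he with h | h
      · exact hMYE (Finset.mem_sdiff.mp h).1
      · exact hMXE (Finset.mem_inter.mp h).1
    · intro e he e' he' h
      rcases Finset.mem_union.mp he with h1 | h1 <;> rcases Finset.mem_union.mp he' with h2 | h2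
      · exact hMY1 e (Finset.mem_sdiff.mp h1).1 e' (Finset.mem_sdiff.mp h2).1 h
      · exact absurd (hP2 e' (Finset.mem_inter.mp h2).2 e
          (Finset.mem_union_right _ (Finset.mem_sdiff.mp h1).1) (Or.inl h.symm))
          (Finset.mem_sdiff.mp h1).2
      · exact absurd (hP2 e (Finset.mem_inter.mp h1).2 e'
          (Finset.mem_union_right _ (Finset.mem_sdiff.mp h2).1) (Or.inl h))
          (Finset.mem_sdiff.mp h2).2
      · exact hMX1 e (Finset.mem_inter.mp h1).1 e' (Finset.mem_inter.mp h2).1 h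
    · intro e he e' he' h
      rcases Finset.mem_union.mp he with h1 | h1 <;> rcases Finset.mem_union.mp he' with h2 | h2
      · exact hMY2 e (Finset.mem_sdiff.mp h1).1 e' (Finset.mem_sdiff.mp h2).1 h
      · exact absurd (hP2 e' (Finset.mem_inter.mp h2).2 e
          (Finset.mem_union_right _ (Finset.mem_sdiff.mp h1).1) (Or.inr h.symm))
          (Finset.mem_sdiff.mp h1).2
      · exact absurd (hP2 e (Finset.mem_inter.mp h1).2 e'
          (Finset.mem_union_right _ (Finset.mem_sdiff.mp h2).1) (Or.inr h))
          (Finset.mem_sdiff.mp h2).2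
      · exact hMX2 e (Finset.mem_inter.mp h1).1 e' (Finset.mem_inter.mp h2).1 h
  -- weights
  have hd1 : Disjoint (MX \ P) (MY ∩ P) := by
    rw [Finset.disjoint_left]
    intro a h1 h2
    exact (Finset.mem_sdiff.mp h1).2 (Finset.mem_inter.mp h2).2
  have hd2 : Disjoint (MY \ P) (MX ∩ P) := by
    rw [Finset.disjoint_left]
    intro a h1 h2
    exact (Finset.mem_sdiff.mp h1).2 (Finset.mem_inter.mp h2).2
  have hsum : (∑ e ∈ (MX \ P) ∪ (MY ∩ P), w e) + (∑ e ∈ (MY \ P) ∪ (MX ∩ P), w e)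
      = (∑ e ∈ MX, w e) + (∑ e ∈ MY, w e) := by
    rw [Finset.sum_union hd1, Finset.sum_union hd2]
    have e1 : ∑ e ∈ MX ∩ P, w e + ∑ e ∈ MX \ P, w e = ∑ e ∈ MX, w e :=
      Finset.sum_inter_add_sum_sdiff MX P w
    have e2 : ∑ e ∈ MY ∩ P, w e + ∑ e ∈ MY \ P, w e = ∑ e ∈ MY, w e :=
      Finset.sum_inter_add_sum_sdiff MY P w
    linarith
  -- the counting lemma for the case v = inl a0
  have hInl : ∀ a0 : U, v = Sum.inl a0 →
      ∃ ev, ev ∈ P ∧ ev ∈ MY ∧ ev.1 = a0 ∧ (∀ f ∈ P, f.1 = a0 → f = ev) ∧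
        (∀ f ∈ MX, f.1 ≠ a0) := by
    intro a0 hv
    have ha0u : a0 ≠ u := fun h => hvu (by rw [hv, h])
    have hva : (P.filter (fun e => e.1 = a0)).card = 1 := by
      have heq : P.filter (fun e => Sum.inl e.1 = v ∨ Sum.inr e.2 = v)
          = P.filter (fun e => e.1 = a0) := by
        apply Finset.filter_congr
        intro e he
        rw [hv]; simp
      rw [← heq]; exact hvend
    obtain ⟨ev, hev⟩ := Finset.card_eq_one.mp hva
    have hevmem : ev ∈ P.filter (fun e => e.1 = a0) := by
      rw [hev]; exact Finset.mem_singleton_self ev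
    have hevP : ev ∈ P := (Finset.mem_filter.mp hevmem).1
    have heva : ev.1 = a0 := (Finset.mem_filter.mp hevmem).2
    have hevuniq : ∀ f ∈ P, f.1 = a0 → f = ev := by
      intro f hf hfa
      have : f ∈ P.filter (fun e => e.1 = a0) := Finset.mem_filter.mpr ⟨hf, hfa⟩
      rw [hev] at this; exact Finset.mem_singleton.mp this
    have hevnX : ev ∉ MX := by
      intro hevX
      have hevnY : ev ∉ MY := fun h => hPI ev hevP (Finset.mem_inter.mpr ⟨hevX, h⟩)
      have heuA : eu ∈ P ∩ MX := Finset.mem_inter.mpr ⟨heuP, heuX⟩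
      have hevA : ev ∈ P ∩ MX := Finset.mem_inter.mpr ⟨hevP, hevX⟩
      have himgB : (P ∩ MY).image Prod.fst = (((P ∩ MX).image Prod.fst).erase u).erase a0 := by
        ext a
        simp only [Finset.mem_image, Finset.mem_erase, Finset.mem_inter]
        constructor
        · rintro ⟨e, ⟨heP, heY⟩, rfl⟩
          have hau : e.1 ≠ u := fun h => hu' (Finset.mem_image.mpr ⟨e, heY, h⟩)
          have haa0 : e.1 ≠ a0 := by
            intro h
            exact hevnY ((hevuniq e heP h) ▸ heY)
          obtain ⟨⟨ex, hexP, hexX, hexa⟩, -⟩ := hboth e.1 hau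
            (by rw [hv]; simpa using haa0) ⟨e, heP, rfl⟩
          exact ⟨haa0, hau, ex, ⟨hexP, hexX⟩, hexa⟩
        · rintro ⟨haa0, hau, e, ⟨heP, heX⟩, rfl⟩
          obtain ⟨-, ⟨ey, heyP, heyY, heya⟩⟩ := hboth e.1 hau
            (by rw [hv]; simpa using haa0) ⟨e, heP, rfl⟩
          exact ⟨ey, ⟨heyP, heyY⟩, heya⟩
      have himg2 : (P ∩ MX).image Prod.snd = (P ∩ MY).image Prod.snd := by
        ext b
        simp only [Finset.mem_image, Finset.mem_inter]
        constructor
        · rintro ⟨e, ⟨heP, heX⟩, rfl⟩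
          obtain ⟨-, ⟨ey, heyP, heyY, heyb⟩⟩ := hbothV e.2 (by rw [hv]; simp) ⟨e, heP, rfl⟩
          exact ⟨ey, ⟨heyP, heyY⟩, heyb⟩
        · rintro ⟨e, ⟨heP, heY⟩, rfl⟩
          obtain ⟨⟨ex, hexP, hexX, hexb⟩, -⟩ := hbothV e.2 (by rw [hv]; simp) ⟨e, heP, rfl⟩
          exact ⟨ex, ⟨hexP, hexX⟩, hexb⟩
      have hcA1 : ((P ∩ MX).image Prod.fst).card = (P ∩ MX).card :=
        Finset.card_image_of_injOn (fun x hx y hy h =>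
          hMX1 x (Finset.mem_inter.mp hx).2 y (Finset.mem_inter.mp hy).2 h)
      have hcA2 : ((P ∩ MX).image Prod.snd).card = (P ∩ MX).card :=
        Finset.card_image_of_injOn (fun x hx y hy h =>
          hMX2 x (Finset.mem_inter.mp hx).2 y (Finset.mem_inter.mp hy).2 h)
      have hcB1 : ((P ∩ MY).image Prod.fst).card = (P ∩ MY).card :=
        Finset.card_image_of_injOn (fun x hx y hy h =>
          hMY1 x (Finset.mem_inter.mp hx).2 y (Finset.mem_inter.mp hy).2 h)
      have hcB2 : ((P ∩ MY).image Prod.snd).card = (P ∩ MY).card :=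
        Finset.card_image_of_injOn (fun x hx y hy h =>
          hMY2 x (Finset.mem_inter.mp hx).2 y (Finset.mem_inter.mp hy).2 h)
      have huA : u ∈ (P ∩ MX).image Prod.fst := Finset.mem_image.mpr ⟨eu, heuA, heuu⟩
      have ha0A : a0 ∈ ((P ∩ MX).image Prod.fst).erase u :=
        Finset.mem_erase.mpr ⟨ha0u, Finset.mem_image.mpr ⟨ev, hevA, heva⟩⟩
      have hcount1 : ((P ∩ MY).image Prod.fst).card = ((P ∩ MX).image Prod.fst).card - 1 - 1 := by
        rw [himgB, Finset.card_erase_of_mem ha0A, Finset.card_erase_of_mem huA]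
      have h2le : 2 ≤ ((P ∩ MX).image Prod.fst).card := by
        have hss : ({u, a0} : Finset U) ⊆ (P ∩ MX).image Prod.fst := by
          intro t ht
          rcases Finset.mem_insert.mp ht with rfl | ht
          · exact huA
          · rw [Finset.mem_singleton.mp ht]; exact (Finset.mem_erase.mp ha0A).2
        have hc2 : ({u, a0} : Finset U).card = 2 := by
          rw [Finset.card_insert_of_notMem (by simp [Ne.symm ha0u]), Finset.card_singleton]
        calc 2 = ({u, a0} : Finset U).card := hc2.symm
          _ ≤ _ := Finset.card_le_card hss
      have hAB : (P ∩ MX).card = (P ∩ MY).card := by rw [← hcA2, ← hcB2, himg2]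
      omega
    have hevY : ev ∈ MY := by
      rcases Finset.mem_union.mp (hPU ev hevP) with h | h
      · exact absurd h hevnX
      · exact h
    have hnoMX : ∀ f ∈ MX, f.1 ≠ a0 := by
      intro f hf h
      have hfP : f ∈ P := hP2 ev hevP f (Finset.mem_union_left _ hf)
        (Or.inl (heva.trans h.symm))
      exact hevnX ((hevuniq f hfP h) ▸ hf)
    exact ⟨ev, hevP, hevY, heva, hevuniq, hnoMX⟩
  refine ⟨hMmatch, hM'match, hsum, ?_, ?_⟩
  · rintro b rfl
    constructor
    · ext a
      simp only [Finset.mem_image, Finset.mem_union, Finset.mem_sdiff, Finset.mem_inter,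
        Finset.mem_erase]
      constructor
      · rintro ⟨e, he, rfl⟩
        rcases he with ⟨heX, heP⟩ | ⟨heY, heP⟩
        · refine ⟨?_, e, heX, rfl⟩
          intro h
          exact heP ((hMXu e heX h) ▸ heuP)
        · have hau : e.1 ≠ u := fun h => hu' (Finset.mem_image.mpr ⟨e, heY, h⟩)
          obtain ⟨⟨ex, hexP, hexX, hexa⟩, -⟩ := hboth e.1 hau (by simp) ⟨e, heP, rfl⟩
          exact ⟨hau, ex, hexX, hexa⟩
      · rintro ⟨hau, e, heX, rfl⟩
        by_cases heP : e ∈ P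
        · obtain ⟨-, ⟨ey, heyP, heyY, heya⟩⟩ := hboth e.1 hau (by simp) ⟨e, heP, rfl⟩
          exact ⟨ey, Or.inr ⟨heyY, heyP⟩, heya⟩
        · exact ⟨e, Or.inl ⟨heX, heP⟩, rfl⟩
    · ext a
      simp only [Finset.mem_image, Finset.mem_union, Finset.mem_sdiff, Finset.mem_inter,
        Finset.mem_insert]
      constructor
      · rintro ⟨e, he, rfl⟩
        rcases he with ⟨heY, heP⟩ | ⟨heX, heP⟩
        · exact Or.inr ⟨e, heY, rfl⟩
        · by_cases hau : e.1 = u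
          · exact Or.inl hau
          · obtain ⟨-, ⟨ey, heyP, heyY, heya⟩⟩ := hboth e.1 hau (by simp) ⟨e, heP, rfl⟩
            exact Or.inr ⟨ey, heyY, heya⟩
      · rintro (rfl | ⟨e, heY, rfl⟩)
        · exact ⟨eu, Or.inr ⟨heuX, heuP⟩, heuu⟩
        · have hau : e.1 ≠ u := fun h => hu' (Finset.mem_image.mpr ⟨e, heY, h⟩)
          by_cases heP : e ∈ P
          · obtain ⟨⟨ex, hexP, hexX, hexa⟩, -⟩ := hboth e.1 hau (by simp) ⟨e, heP, rfl⟩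
            exact ⟨ex, Or.inr ⟨hexX, hexP⟩, hexa⟩
          · exact ⟨e, Or.inl ⟨heY, heP⟩, rfl⟩
  · rintro a0 hv
    obtain ⟨ev, hevP, hevY, heva, hevuniq, hnoMX⟩ := hInl a0 hv
    have ha0u : a0 ≠ u := fun h => hvu (by rw [hv, h])
    constructor
    · ext a
      simp only [Finset.mem_image, Finset.mem_union, Finset.mem_sdiff, Finset.mem_inter,
        Finset.mem_insert, Finset.mem_erase]
      constructor
      · rintro ⟨e, he, rfl⟩
        rcases he with ⟨heX, heP⟩ | ⟨heY, heP⟩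
        · refine Or.inr ⟨?_, e, heX, rfl⟩
          intro h
          exact heP ((hMXu e heX h) ▸ heuP)
        · by_cases haa0 : e.1 = a0
          · exact Or.inl haa0
          · have hau : e.1 ≠ u := fun h => hu' (Finset.mem_image.mpr ⟨e, heY, h⟩)
            obtain ⟨⟨ex, hexP, hexX, hexa⟩, -⟩ := hboth e.1 hau
              (by rw [hv]; simpa using haa0) ⟨e, heP, rfl⟩
            exact Or.inr ⟨hau, ex, hexX, hexa⟩
      · rintro (rfl | ⟨hau, e, heX, rfl⟩)
        · exact ⟨ev, Or.inr ⟨hevY, hevP⟩, heva⟩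
        · by_cases heP : e ∈ P
          · have haa0 : e.1 ≠ a0 := hnoMX e heX
            obtain ⟨-, ⟨ey, heyP, heyY, heya⟩⟩ := hboth e.1 hau
              (by rw [hv]; simpa using haa0) ⟨e, heP, rfl⟩
            exact ⟨ey, Or.inr ⟨heyY, heyP⟩, heya⟩
          · exact ⟨e, Or.inl ⟨heX, heP⟩, rfl⟩
    · ext a
      simp only [Finset.mem_image, Finset.mem_union, Finset.mem_sdiff, Finset.mem_inter,
        Finset.mem_insert, Finset.mem_erase]
      constructor
      · rintro ⟨e, he, rfl⟩
        rcases he with ⟨heY, heP⟩ | ⟨heX, heP⟩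
        · have haa0 : e.1 ≠ a0 := by
            intro h
            exact heP ((hMY1 e heY ev hevY (h.trans heva.symm)) ▸ hevP)
          exact ⟨haa0, Or.inr ⟨e, heY, rfl⟩⟩
        · have haa0 : e.1 ≠ a0 := hnoMX e heX
          by_cases hau : e.1 = u
          · exact ⟨haa0, Or.inl hau⟩
          · obtain ⟨-, ⟨ey, heyP, heyY, heya⟩⟩ := hboth e.1 hau
              (by rw [hv]; simpa using haa0) ⟨e, heP, rfl⟩
            exact ⟨haa0, Or.inr ⟨ey, heyY, heya⟩⟩
      · rintro ⟨haa0, rfl | ⟨e, heY, rfl⟩⟩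
        · exact ⟨eu, Or.inr ⟨heuX, heuP⟩, heuu⟩
        · have hau : e.1 ≠ u := fun h => hu' (Finset.mem_image.mpr ⟨e, heY, h⟩)
          by_cases heP : e ∈ P
          · obtain ⟨⟨ex, hexP, hexX, hexa⟩, -⟩ := hboth e.1 hau
              (by rw [hv]; simpa using haa0) ⟨e, heP, rfl⟩
            exact ⟨ex, Or.inr ⟨hexX, hexP⟩, hexa⟩
          · exact ⟨e, Or.inl ⟨heY, heP⟩, rfl⟩
end
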